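/- For every sequence q = q(n) of integers with q(n)/n → ∞, the probability that a random n×n puzzle with q jig types contains either two distinct pieces whose carvings are identical up to rotation, or a piece whose carving is invariant under 180° rotation, tends to 0 as n → ∞. -/

import Mathlib

open Finset Filter

noncomputable section

/-- A piece of the `n × n` puzzle, identified with its cell in the original grid. -/
abbrev Cell (n : ℕ) := Fin n × Fin n

/-- The unit vector in direction `d` (`0` = right, `1` = up, `2` = left, `3` = down). -/
def dirVec (d : ZMod 4) : ℤ × ℤ :=
  if d = 0 then (1, 0) else if d = 1 then (0, 1) else if d = 2 then (-1, 0) else (0, -1)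

/-- The integer coordinates of a cell. -/
def cellZ {n : ℕ} (c : Cell n) : ℤ × ℤ := ((c.1 : ℤ), (c.2 : ℤ))

/-- A carving assigns a jig type (one of `q` possibilities) to each of the four
(cyclically ordered) sides of each of the `n²` pieces. -/
abbrev Carving (n q : ℕ) := Cell n → ZMod 4 → Fin q

/-- A carving is valid if each pair of coincident sides of adjacent pieces of the
original grid receives complementary jig types (`ι` is the complementation involution). -/
def IsValidCarving {n q : ℕ} (ι : Fin q → Fin q) (ω : Carving n q) : Prop :=
  ∀ p p' : Cell n, ∀ d : ZMod 4,
    cellZ p' = cellZ p + dirVec d → ω p' (d + 2) = ι (ω p d)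

open scoped Classical in
/-- The probability of the event `P` for a carving chosen uniformly at random among
all valid carvings. -/
def puzzleProb {n q : ℕ} (ι : Fin q → Fin q) (P : Carving n q → Prop) : ℝ :=
  ((Finset.univ.filter fun ω : Carving n q => IsValidCarving ι ω ∧ P ω).card : ℝ) /
  ((Finset.univ.filter fun ω : Carving n q => IsValidCarving ι ω).card : ℝ)

/-- A complete assembly: a bijective placement of the pieces onto the cells of the
`n × n` grid together with an orientation (`ℤ/4`) for each piece. -/
structure Assembly (n : ℕ) where
  pos : Equiv.Perm (Cell n)
  rot : Cell n → ZMod 4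

/-- The planted assembly keeps every piece in its original position and orientation. -/
def planted (n : ℕ) : Assembly n := ⟨Equiv.refl _, fun _ => 0⟩

/-- A complete assembly is feasible for the carving `ω` if all pairs of abutting sides
carry complementary jig types.  The side of piece `p` facing direction `d` after `p` is
rotated by `A.rot p` quarter turns is its original side `d - A.rot p`. -/
def Assembly.Feasible {n q : ℕ} (ι : Fin q → Fin q) (A : Assembly n) (ω : Carving n q) :
    Prop :=
  ∀ p p' : Cell n, ∀ d : ZMod 4,
    cellZ (A.pos p') = cellZ (A.pos p) + dirVec d →
    ω p' (d + 2 - A.rot p') = ι (ω p (d - A.rot p))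

/-- The carving of the grid obtained by reassembling the pieces according to `A`:
side `d` of the grid cell `c` receives the jig type of the corresponding side of the
piece placed on `c`. -/
def Assembly.carving {n q : ℕ} (A : Assembly n) (ω : Carving n q) : Carving n q :=
  fun c d => ω (A.pos.symm c) (d - A.rot (A.pos.symm c))

/-- Rotation of the grid by 90 degrees. -/
def rotCell {n : ℕ} : Equiv.Perm (Cell n) where
  toFun c := (c.2.rev, c.1)
  invFun c := (c.2, c.1.rev)
  left_inv c := by simp
  right_inv c := by simp

/-- Global rotation of a carving of the grid by 90 degrees. -/
def rotateCarving {n q : ℕ} (ω : Carving n q) : Carving n q :=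
  fun c d => ω (rotCell.symm c) (d - 1)

/-- Two solutions are similar if they differ only by a global rotation of the puzzle,
a permutation of pieces with identical carvings, and rotations of pieces whose carving
is rotation-invariant; equivalently, if they induce the same carving of the grid up to
a global rotation. -/
def PuzzleSimilar {n q : ℕ} (A B : Assembly n) (ω : Carving n q) : Prop :=
  ∃ r : Fin 4, B.carving ω = rotateCarving^[r.val] (A.carving ω)

/-- The planted assembly rotated globally by `r` quarter turns. -/
def rotatedPlanted (n : ℕ) (r : Fin 4) : Assembly n :=
  ⟨rotCell ^ r.val, fun _ => (r.val : ZMod 4)⟩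

/-- The cell `c` belongs to the `k × k` window with lower-left corner `(a, b)`. -/
def inWindow {n : ℕ} (a b k : ℕ) (c : Cell n) : Prop :=
  a ≤ c.1.val ∧ c.1.val < a + k ∧ b ≤ c.2.val ∧ c.2.val < b + k

open scoped Classical in
/-- The number of dual edges of the `k × k` window at `(a, b)` (each dual edge recorded
once, as `(c, c', d)` with `d ∈ {right, up}`) whose abutting jig types, for the carving
induced by the assembly `A`, form the complementary pair `{j, ι j}`. -/
def windowTypeCount {n q : ℕ} (ι : Fin q → Fin q) (A : Assembly n) (ω : Carving n q)
    (a b k : ℕ) (j : Fin q) : ℕ :=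
  (Finset.univ.filter fun x : Cell n × Cell n × Fin 2 =>
    inWindow a b k x.1 ∧ inWindow a b k x.2.1 ∧
    cellZ x.2.1 = cellZ x.1 + dirVec (x.2.2.val : ZMod 4) ∧
    (A.carving ω x.1 (x.2.2.val : ZMod 4) = j ∨
      A.carving ω x.1 (x.2.2.val : ZMod 4) = ι j)).card

open scoped Classical in
/-- The shape multiplicity of the `k × k` window at `(a, b)`: the sum, over unordered
complementary pairs `J = {j, ι j}`, of `⌊(number of dual edges of the window of type J)/2⌋`. -/
def windowSM {n q : ℕ} (ι : Fin q → Fin q) (A : Assembly n) (ω : Carving n q)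
    (a b k : ℕ) : ℕ :=
  ∑ j ∈ Finset.univ.filter (fun j : Fin q => j ≤ ι j),
    windowTypeCount ι A ω a b k j / 2

/-- A feasible complete assembly is `k`-good if every `k × k` window touching the boundary
of the puzzle has shape multiplicity at most `1`, and every other `k × k` window has shape
multiplicity at most `2`. -/
def KGood {n q : ℕ} (ι : Fin q → Fin q) (A : Assembly n) (ω : Carving n q) (k : ℕ) :
    Prop :=
  A.Feasible ι ω ∧
    ∀ a b : ℕ, a + k ≤ n → b + k ≤ n →
      windowSM ι A ω a b k ≤ 2 ∧
      ((a = 0 ∨ b = 0 ∨ a + k = n ∨ b + k = n) → windowSM ι A ω a b k ≤ 1)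

/-- A partial assembly: an injective placement of a subset of the pieces into the square
grid `ℤ²`, together with an orientation for each placed piece. -/
structure PartialAssembly (n : ℕ) where
  pieces : Finset (Cell n)
  pos : Cell n → ℤ × ℤ
  rot : Cell n → ZMod 4
  pos_inj : ∀ p ∈ pieces, ∀ p' ∈ pieces, pos p = pos p' → p = p'

/-- A partial assembly is feasible for `ω` if all pairs of abutting sides carry
complementary jig types. -/
def PartialAssembly.Feasible {n q : ℕ} (ι : Fin q → Fin q) (A : PartialAssembly n)
    (ω : Carving n q) : Prop :=
  ∀ p ∈ A.pieces, ∀ p' ∈ A.pieces, ∀ d : ZMod 4,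
    A.pos p' = A.pos p + dirVec d →
    ω p' (d + 2 - A.rot p') = ι (ω p (d - A.rot p))

open scoped Classical in
/-- The edges of the contour graph `C(A)`: the dual edges of `A` (each recorded once, as
`(p, p', d)` with `d ∈ {right, up}`, `p'` being placed in direction `d` from `p`) whose two
abutting piece sides are not coincident in the planted assembly. -/
def contourEdges {n : ℕ} (A : PartialAssembly n) : Finset (Cell n × Cell n × Fin 2) :=
  Finset.univ.filter fun x =>
    x.1 ∈ A.pieces ∧ x.2.1 ∈ A.pieces ∧
    A.pos x.2.1 = A.pos x.1 + dirVec (x.2.2.val : ZMod 4) ∧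
    ¬ (A.rot x.2.1 = A.rot x.1 ∧
        cellZ x.2.1 = cellZ x.1 + dirVec ((x.2.2.val : ZMod 4) - A.rot x.1))

/-- The piece sides lying across the edges of the contour graph of `A`. -/
def crossingSides {n : ℕ} (A : PartialAssembly n) : Set (Cell n × ZMod 4) :=
  {ps | ∃ x ∈ contourEdges A,
    ps = (x.1, (x.2.2.val : ZMod 4) - A.rot x.1) ∨
    ps = (x.2.1, (x.2.2.val : ZMod 4) + 2 - A.rot x.2.1)}

/-- Two piece sides are coincident in the planted assembly. -/
def CoincidentPlanted {n : ℕ} (ps ps' : Cell n × ZMod 4) : Prop :=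
  cellZ ps'.1 = cellZ ps.1 + dirVec ps.2 ∧ ps'.2 = ps.2 + 2

open scoped Classical in
/-- The shape multiplicity `sm(C(A), ω)` of the contour graph of `A` with respect to `ω`:
the sum, over unordered complementary pairs `J = {j, ι j}`, of
`⌊(number of contour edges of type J)/2⌋`. -/
def contourSM {n q : ℕ} (ι : Fin q → Fin q) (A : PartialAssembly n) (ω : Carving n q) :
    ℕ :=
  ∑ j ∈ Finset.univ.filter (fun j : Fin q => j ≤ ι j),
    ((contourEdges A).filter fun x =>
      ω x.1 ((x.2.2.val : ZMod 4) - A.rot x.1) = j ∨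
      ω x.1 ((x.2.2.val : ZMod 4) - A.rot x.1) = ι j).card / 2

end

/-!
Union bound. Each elementary bad event forces some sides of one piece to copy the jig types of
other sides: for distinct pieces `p, p'` agreeing up to a rotation, the three or four sides of
`p'` not facing `p`; for a piece invariant under a half turn, two of its sides. If on an event
the jig types on a set `S` of pairwise non-coincident sides are determined by the sides off `S`
and off their partners, then overwriting `S` arbitrarily (and the partners by the complementary
types) injects the event times `S → Fin q` into the valid carvings, so the event has probability
at most `q ^ (-|S|)`. As a piece has at most four neighbours, the sum is at most
`4n⁴/q⁴ + 16n²/q³ + n²/q²`, which tends to `0` when `q/n → ∞`.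
-/

section Geometry

variable {n : ℕ}

lemma cellZ_injective : Function.Injective (cellZ (n := n)) := by
  rintro ⟨a, b⟩ ⟨c, d⟩ h
  simp only [cellZ, Prod.mk.injEq, Int.natCast_inj] at h
  exact Prod.ext (Fin.ext h.1) (Fin.ext h.2)

lemma dirVec_injective : Function.Injective dirVec := by decide

lemma dirVec_add_two (d : ZMod 4) : dirVec (d + 2) = -dirVec d := by revert d; decide

lemma dirVec_ne_zero (d : ZMod 4) : dirVec d ≠ 0 := by revert d; decide

lemma CoincidentPlanted.fst_ne {a b : Cell n × ZMod 4} (h : CoincidentPlanted a b) :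
    a.1 ≠ b.1 := fun hab =>
  dirVec_ne_zero a.2 (by simpa [hab] using h.1)

lemma CoincidentPlanted.right_unique {a b b' : Cell n × ZMod 4} (h : CoincidentPlanted a b)
    (h' : CoincidentPlanted a b') : b = b' :=
  Prod.ext (cellZ_injective (h.1.trans h'.1.symm)) (h.2.trans h'.2.symm)

lemma CoincidentPlanted.facing {a b : Cell n × ZMod 4} (h : CoincidentPlanted a b) :
    cellZ b.1 + dirVec b.2 = cellZ a.1 := by
  rw [h.1, h.2, dirVec_add_two, add_neg_cancel_right]

lemma CoincidentPlanted.symm {a b : Cell n × ZMod 4} (h : CoincidentPlanted a b) :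
    CoincidentPlanted b a := by
  refine ⟨h.facing.symm, ?_⟩
  rw [h.2, add_assoc, show (2 : ZMod 4) + 2 = 0 from rfl, add_zero]

def facingSides (c c' : Cell n) : Finset (ZMod 4) :=
  univ.filter fun d => cellZ c + dirVec d = cellZ c'

lemma card_facingSides_le_one (c c' : Cell n) : (facingSides c c').card ≤ 1 :=
  card_le_one.mpr fun _ hd _ he => dirVec_injective <| add_left_cancel <|
    (mem_filter.mp hd).2.trans (mem_filter.mp he).2.symm

lemma sum_card_facingSides_le (c : Cell n) : ∑ c', (facingSides c c').card ≤ 4 := by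
  have hd : ∀ d : ZMod 4,
      (univ.filter fun c' : Cell n => cellZ c + dirVec d = cellZ c').card ≤ 1 := fun d =>
    card_le_one.mpr fun _ hx _ hy => cellZ_injective <|
      (mem_filter.mp hx).2.symm.trans (mem_filter.mp hy).2
  calc ∑ c', (facingSides c c').card
      = ∑ d : ZMod 4, (univ.filter fun c' : Cell n => cellZ c + dirVec d = cellZ c').card := by
        simp only [facingSides, card_filter]
        exact sum_comm
    _ ≤ ∑ _d : ZMod 4, 1 := sum_le_sum fun d _ => hd d
    _ = 4 := rfl

end Geometry

section Probability

variable {n q : ℕ} {ι : Fin q → Fin q}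

lemma puzzleProb_nonneg (P : Carving n q → Prop) : 0 ≤ puzzleProb ι P := by
  unfold puzzleProb
  positivity

lemma puzzleProb_mono {P Q : Carving n q → Prop} (h : ∀ ω, P ω → Q ω) :
    puzzleProb ι P ≤ puzzleProb ι Q := by
  unfold puzzleProb
  gcongr
  exact h _

lemma puzzleProb_eq_zero_of_forall_not {P : Carving n q → Prop} (h : ∀ ω, ¬ P ω) :
    puzzleProb ι P = 0 := by
  simp [puzzleProb, h]

lemma puzzleProb_or_le (P Q : Carving n q → Prop) :
    puzzleProb ι (fun ω => P ω ∨ Q ω) ≤ puzzleProb ι P + puzzleProb ι Q := by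
  unfold puzzleProb
  rw [← add_div]
  gcongr
  norm_cast
  refine (card_le_card fun ω hω => ?_).trans (card_union_le _ _)
  simp only [mem_filter, mem_union] at hω ⊢
  tauto

lemma puzzleProb_exists_le {α : Type*} [Fintype α] (P : α → Carving n q → Prop) :
    puzzleProb ι (fun ω => ∃ a, P a ω) ≤ ∑ a, puzzleProb ι (P a) := by
  unfold puzzleProb
  rw [← sum_div]
  gcongr
  norm_cast
  refine (card_le_card fun ω hω => ?_).trans card_biUnion_le
  simp only [mem_filter, mem_biUnion, mem_univ, true_and] at hω ⊢
  obtain ⟨hω, a, ha⟩ := hω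
  exact ⟨a, hω, ha⟩

end Probability

section Resampling

open scoped Classical

variable {n q : ℕ} {ι : Fin q → Fin q}

lemma IsValidCarving.apply_of_coincidentPlanted {ω : Carving n q} (hω : IsValidCarving ι ω)
    {a b : Cell n × ZMod 4} (h : CoincidentPlanted a b) : ω b.1 b.2 = ι (ω a.1 a.2) := by
  rw [h.2]
  exact hω a.1 b.1 a.2 h.1

variable (ι) in
noncomputable def resample (S : Finset (Cell n × ZMod 4)) (g : S → Fin q) (ω : Carving n q) :
    Carving n q :=
  fun p d =>
    if h : (p, d) ∈ S then g ⟨(p, d), h⟩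
    else if h' : ∃ x : S, CoincidentPlanted (p, d) x then ι (g h'.choose)
    else ω p d

variable (ι) in
def IsDeterminedOutside (S : Finset (Cell n × ZMod 4)) (E : Carving n q → Prop) : Prop :=
  ∀ ω₁ ω₂, IsValidCarving ι ω₁ → IsValidCarving ι ω₂ → E ω₁ → E ω₂ →
    (∀ a ∉ S, (∀ x ∈ S, ¬ CoincidentPlanted a x) → ω₁ a.1 a.2 = ω₂ a.1 a.2) →
    ∀ x ∈ S, ω₁ x.1 x.2 = ω₂ x.1 x.2

variable {S : Finset (Cell n × ZMod 4)} {g : S → Fin q} {ω : Carving n q}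

lemma resample_of_mem {a : Cell n × ZMod 4} (h : a ∈ S) :
    resample ι S g ω a.1 a.2 = g ⟨a, h⟩ := by
  simp [resample, h]

lemma resample_of_coincidentPlanted {a : Cell n × ZMod 4} (h : a ∉ S) (x : S)
    (hx : CoincidentPlanted a x) : resample ι S g ω a.1 a.2 = ι (g x) := by
  have h' : ∃ x : S, CoincidentPlanted a x := ⟨x, hx⟩
  have hchoose : h'.choose = x := Subtype.ext (h'.choose_spec.right_unique hx)
  simp only [resample, dif_neg h, dif_pos h', hchoose]

lemma resample_of_untouched {a : Cell n × ZMod 4} (h : a ∉ S)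
    (h' : ∀ x ∈ S, ¬ CoincidentPlanted a x) : resample ι S g ω a.1 a.2 = ω a.1 a.2 := by
  have h'' : ¬ ∃ x : S, CoincidentPlanted a x := fun ⟨x, hx⟩ => h' x x.2 hx
  simp only [resample, dif_neg h, dif_neg h'']

lemma isValidCarving_resample (hι : Function.Involutive ι)
    (hS : ∀ x ∈ S, ∀ y ∈ S, ¬ CoincidentPlanted x y) (hω : IsValidCarving ι ω) :
    IsValidCarving ι (resample ι S g ω) := by
  intro p p' d hadj
  have hab : CoincidentPlanted (p, d) (p', d + 2) := ⟨hadj, rfl⟩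
  by_cases ha : (p, d) ∈ S
  · have hb : (p', d + 2) ∉ S := fun hb => hS _ ha _ hb hab
    exact (resample_of_coincidentPlanted hb ⟨_, ha⟩ hab.symm).trans
      (congrArg ι (resample_of_mem ha).symm)
  by_cases hb : (p', d + 2) ∈ S
  · rw [resample_of_mem (a := (p', d + 2)) hb,
      resample_of_coincidentPlanted (a := (p, d)) ha ⟨_, hb⟩ hab, hι]
  have ha' : ∀ x ∈ S, ¬ CoincidentPlanted (p, d) x := fun x hx hc =>
    hb (hab.right_unique hc ▸ hx)
  have hb' : ∀ x ∈ S, ¬ CoincidentPlanted (p', d + 2) x := fun x hx hc =>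
    ha (hab.symm.right_unique hc ▸ hx)
  rw [resample_of_untouched (a := (p', d + 2)) hb hb', resample_of_untouched (a := (p, d)) ha ha']
  exact hω p p' d hadj

lemma resample_injOn (hι : Function.Involutive ι) {E : Carving n q → Prop}
    (hE : IsDeterminedOutside ι S E) :
    Set.InjOn (fun x : Carving n q × (S → Fin q) => resample ι S x.2 x.1)
      {x | IsValidCarving ι x.1 ∧ E x.1} := by
  rintro ⟨ω₁, g₁⟩ ⟨hv₁, hE₁⟩ ⟨ω₂, g₂⟩ ⟨hv₂, hE₂⟩ heq
  dsimp only at hv₁ hE₁ hv₂ hE₂ heq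
  have happ : ∀ a : Cell n × ZMod 4,
      resample ι S g₁ ω₁ a.1 a.2 = resample ι S g₂ ω₂ a.1 a.2 := fun a =>
    congrFun (congrFun heq a.1) a.2
  have hg : g₁ = g₂ := funext fun x => by
    simpa only [resample_of_mem x.2] using happ x
  have hoff : ∀ a ∉ S, (∀ x ∈ S, ¬ CoincidentPlanted a x) → ω₁ a.1 a.2 = ω₂ a.1 a.2 :=
    fun a ha ha' => by simpa only [resample_of_untouched ha ha'] using happ a
  have hon := hE ω₁ ω₂ hv₁ hv₂ hE₁ hE₂ hoff
  have hω : ω₁ = ω₂ := by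
    funext p d
    show ω₁ p d = ω₂ p d
    by_cases ha : (p, d) ∈ S
    · exact hon _ ha
    by_cases hc : ∃ x ∈ S, CoincidentPlanted (p, d) x
    · obtain ⟨x, hx, hc⟩ := hc
      apply hι.injective
      rw [← hv₁.apply_of_coincidentPlanted hc, ← hv₂.apply_of_coincidentPlanted hc, hon x hx]
    · push Not at hc
      exact hoff _ ha hc
  rw [hg, hω]

theorem puzzleProb_le_of_determined (hι : Function.Involutive ι) (hq : 0 < q)
    {E : Carving n q → Prop} (hS : ∀ x ∈ S, ∀ y ∈ S, ¬ CoincidentPlanted x y)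
    (hE : IsDeterminedOutside ι S E) :
    puzzleProb ι E ≤ (q : ℝ)⁻¹ ^ S.card := by
  unfold puzzleProb
  set V := univ.filter fun ω : Carving n q => IsValidCarving ι ω
  set A := univ.filter fun ω : Carving n q => IsValidCarving ι ω ∧ E ω
  have hcard : A.card * q ^ S.card ≤ V.card := by
    calc A.card * q ^ S.card = (A ×ˢ (univ : Finset (S → Fin q))).card := by
          simp [card_product]
      _ ≤ V.card := by
        refine card_le_card_of_injOn _ (fun x hx => ?_) ((resample_injOn hι hE).mono ?_)
        · rw [mem_coe, mem_product, mem_filter] at hx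
          rw [mem_coe, mem_filter]
          exact ⟨mem_univ _, isValidCarving_resample hι hS hx.1.2.1⟩
        · intro x hx
          rw [mem_coe, mem_product, mem_filter] at hx
          exact hx.1.2
  rcases Nat.eq_zero_or_pos V.card with hV | hV
  · simp [hV]
  rw [div_le_iff₀ (by exact_mod_cast hV), inv_pow, ← div_eq_inv_mul,
    le_div_iff₀ (by positivity)]
  exact_mod_cast hcard

end Resampling

section Events

variable {n q : ℕ} {ι : Fin q → Fin q}

lemma pairwise_not_coincidentPlanted_map_sectR (c : Cell n) (D : Finset (ZMod 4)) :
    ∀ x ∈ D.map (Function.Embedding.sectR c _), ∀ y ∈ D.map (Function.Embedding.sectR c _),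
      ¬ CoincidentPlanted x y := by
  rintro _ hx _ hy h
  obtain ⟨d, -, rfl⟩ := mem_map.mp hx
  obtain ⟨e, -, rfl⟩ := mem_map.mp hy
  exact h.fst_ne rfl

lemma puzzleProb_rotEq_le (hι : Function.Involutive ι) (hq : 0 < q) {p p' : Cell n}
    (hpp' : p ≠ p') (r : ZMod 4) :
    puzzleProb ι (fun ω : Carving n q => ∀ s, ω p' s = ω p (s + r)) ≤
      (q : ℝ)⁻¹ ^ (4 - (facingSides p' p).card) := by
  have hcard : ((facingSides p' p)ᶜ.map (Function.Embedding.sectR p' _)).card =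
      4 - (facingSides p' p).card := by
    rw [card_map, card_compl, ZMod.card]
  rw [← hcard]
  refine puzzleProb_le_of_determined hι hq (pairwise_not_coincidentPlanted_map_sectR _ _) ?_
  -- A side of `p'` facing `p` is coincident with the side of `p` it would copy, which
  -- resampling would also change; so only the other sides can be resampled.
  rintro ω₁ ω₂ - - h₁ h₂ hoff _ hx
  obtain ⟨d, -, rfl⟩ := mem_map.mp hx
  have huntouched : ω₁ p (d + r) = ω₂ p (d + r) := by
    refine hoff (p, d + r) (fun hmem => ?_) fun x hx hc => ?_
    · obtain ⟨e, -, he⟩ := mem_map.mp hmem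
      exact hpp' (congrArg Prod.fst he).symm
    · obtain ⟨e, he, rfl⟩ := mem_map.mp hx
      exact mem_compl.mp he (mem_filter.mpr ⟨mem_univ _, hc.facing⟩)
  simpa [h₁, h₂] using huntouched

lemma puzzleProb_halfTurnInvariant_le (hι : Function.Involutive ι) (hq : 0 < q) (p : Cell n) :
    puzzleProb ι (fun ω : Carving n q => ∀ s, ω p (s + 2) = ω p s) ≤ (q : ℝ)⁻¹ ^ 2 := by
  refine (puzzleProb_le_of_determined hι hq
    (pairwise_not_coincidentPlanted_map_sectR p {2, 3}) ?_).trans_eq rfl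
  rintro ω₁ ω₂ - - h₁ h₂ hoff _ hx
  obtain ⟨d, hd, rfl⟩ := mem_map.mp hx
  have hd2 : d + 2 ∉ ({2, 3} : Finset (ZMod 4)) := by
    clear hx
    revert d
    decide
  have huntouched : ω₁ p (d + 2) = ω₂ p (d + 2) := by
    refine hoff (p, d + 2) (fun hmem => ?_) fun x hx hc => ?_
    · obtain ⟨e, he, he'⟩ := mem_map.mp hmem
      simp only [Function.Embedding.sectR_apply, Prod.mk.injEq] at he'
      exact hd2 (he'.2 ▸ he)
    · obtain ⟨e, -, rfl⟩ := mem_map.mp hx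
      exact hc.fst_ne rfl
  simpa [h₁, h₂] using huntouched

end Events

section Bound

variable {n q : ℕ} {ι : Fin q → Fin q}

lemma inv_pow_sub_card_facingSides_le (c c' : Cell n) :
    (q : ℝ)⁻¹ ^ (4 - (facingSides c c').card) ≤
      (q : ℝ)⁻¹ ^ 4 + (facingSides c c').card * (q : ℝ)⁻¹ ^ 3 := by
  have h := card_facingSides_le_one c c'
  interval_cases (facingSides c c').card <;> simp

lemma puzzleProb_ne_and_rotEq_le (hι : Function.Involutive ι) (hq : 0 < q) (p p' : Cell n) :
    puzzleProb ι (fun ω : Carving n q => p ≠ p' ∧ ∃ r : ZMod 4, ∀ s, ω p' s = ω p (s + r)) ≤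
      4 * ((q : ℝ)⁻¹ ^ 4 + (facingSides p' p).card * (q : ℝ)⁻¹ ^ 3) := by
  by_cases hpp' : p = p'
  · rw [puzzleProb_eq_zero_of_forall_not fun ω h => h.1 hpp']
    positivity
  calc _ ≤ puzzleProb ι (fun ω : Carving n q => ∃ r : ZMod 4, ∀ s, ω p' s = ω p (s + r)) :=
        puzzleProb_mono fun ω h => h.2
    _ ≤ ∑ r : ZMod 4, puzzleProb ι (fun ω : Carving n q => ∀ s, ω p' s = ω p (s + r)) :=
        puzzleProb_exists_le _
    _ ≤ ∑ _r : ZMod 4, (q : ℝ)⁻¹ ^ (4 - (facingSides p' p).card) :=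
        sum_le_sum fun r _ => puzzleProb_rotEq_le hι hq hpp' r
    _ ≤ _ := by
        rw [sum_const, card_univ, ZMod.card, nsmul_eq_mul, Nat.cast_ofNat]
        gcongr
        exact inv_pow_sub_card_facingSides_le p' p

lemma puzzleProb_exists_rotEq_le (hι : Function.Involutive ι) (hq : 0 < q) :
    puzzleProb ι (fun ω : Carving n q =>
        ∃ p p' : Cell n, p ≠ p' ∧ ∃ r : ZMod 4, ∀ s, ω p' s = ω p (s + r)) ≤
      4 * (n : ℝ) ^ 4 * (q : ℝ)⁻¹ ^ 4 + 16 * (n : ℝ) ^ 2 * (q : ℝ)⁻¹ ^ 3 := by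
  have hfacing : ∑ p : Cell n, ∑ p' : Cell n, ((facingSides p' p).card : ℝ) ≤ 4 * n ^ 2 := by
    rw [sum_comm]
    calc _ ≤ ∑ _p' : Cell n, (4 : ℝ) :=
          sum_le_sum fun p' _ => by exact_mod_cast sum_card_facingSides_le p'
      _ = 4 * n ^ 2 := by
        rw [sum_const, card_univ, Fintype.card_prod, Fintype.card_fin, nsmul_eq_mul]
        push_cast
        ring
  calc _ ≤ ∑ p : Cell n, ∑ p' : Cell n, puzzleProb ι (fun ω : Carving n q =>
          p ≠ p' ∧ ∃ r : ZMod 4, ∀ s, ω p' s = ω p (s + r)) :=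
        (puzzleProb_exists_le _).trans (sum_le_sum fun p _ => puzzleProb_exists_le _)
    _ ≤ ∑ p : Cell n, ∑ p' : Cell n,
          4 * ((q : ℝ)⁻¹ ^ 4 + (facingSides p' p).card * (q : ℝ)⁻¹ ^ 3) :=
        sum_le_sum fun p _ => sum_le_sum fun p' _ => puzzleProb_ne_and_rotEq_le hι hq p p'
    _ = 4 * (n : ℝ) ^ 4 * (q : ℝ)⁻¹ ^ 4 +
          4 * (q : ℝ)⁻¹ ^ 3 * ∑ p : Cell n, ∑ p' : Cell n, ((facingSides p' p).card : ℝ) := by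
        simp only [mul_add, sum_add_distrib, sum_const, card_univ, Fintype.card_prod,
          Fintype.card_fin, mul_sum, nsmul_eq_mul]
        push_cast
        ring_nf
    _ ≤ _ := by nlinarith [pow_nonneg (inv_nonneg.mpr (Nat.cast_nonneg q : (0 : ℝ) ≤ q)) 3]

lemma puzzleProb_exists_halfTurnInvariant_le (hι : Function.Involutive ι) (hq : 0 < q) :
    puzzleProb ι (fun ω : Carving n q => ∃ p : Cell n, ∀ s, ω p (s + 2) = ω p s) ≤
      (n : ℝ) ^ 2 * (q : ℝ)⁻¹ ^ 2 :=
  calc _ ≤ ∑ p : Cell n, puzzleProb ι (fun ω : Carving n q => ∀ s, ω p (s + 2) = ω p s) :=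
        puzzleProb_exists_le _
    _ ≤ ∑ _p : Cell n, (q : ℝ)⁻¹ ^ 2 :=
        sum_le_sum fun p _ => puzzleProb_halfTurnInvariant_le hι hq p
    _ = _ := by simp [card_univ, sq]

lemma puzzleProb_le (hι : Function.Involutive ι) (hq : 0 < q) :
    puzzleProb ι (fun ω : Carving n q =>
        (∃ p p' : Cell n, p ≠ p' ∧ ∃ r : ZMod 4, ∀ s, ω p' s = ω p (s + r)) ∨
        (∃ p : Cell n, ∀ s, ω p (s + 2) = ω p s)) ≤
      17 * ((n : ℝ) / q) ^ 2 + 4 * ((n : ℝ) / q) ^ 4 := by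
  have hq' : (q : ℝ)⁻¹ ^ 3 ≤ (q : ℝ)⁻¹ ^ 2 :=
    pow_le_pow_of_le_one (by positivity) (inv_le_one_of_one_le₀ (by exact_mod_cast hq))
      (by norm_num)
  calc _ ≤ _ := puzzleProb_or_le _ _
    _ ≤ 4 * (n : ℝ) ^ 4 * (q : ℝ)⁻¹ ^ 4 + 16 * (n : ℝ) ^ 2 * (q : ℝ)⁻¹ ^ 3 +
          (n : ℝ) ^ 2 * (q : ℝ)⁻¹ ^ 2 :=
        add_le_add (puzzleProb_exists_rotEq_le hι hq)
          (puzzleProb_exists_halfTurnInvariant_le hι hq)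
    _ ≤ _ := by
        rw [div_eq_mul_inv, mul_pow, mul_pow]
        nlinarith [sq_nonneg (n : ℝ)]

end Bound

/-- For every sequence `q = q(n)` of integers with `q(n)/n → ∞`
(and any choice of complementation involutions), the probability that a random `n × n`
puzzle with `q` jig types contains either two distinct pieces whose carvings are
identical up to rotation, or a piece whose carving is invariant under a 180° rotation,
tends to `0` as `n → ∞`. -/
theorem statement_3 (q : ℕ → ℕ) (ι : ∀ n, Fin (q n) → Fin (q n))
    (hι : ∀ n, ι n ∘ ι n = id)
    (hq : Tendsto (fun n => (q n : ℝ) / n) atTop atTop) :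
    Tendsto (fun n =>
        puzzleProb (ι n) fun ω : Carving n (q n) =>
          (∃ p p' : Cell n, p ≠ p' ∧ ∃ r : ZMod 4, ∀ s, ω p' s = ω p (s + r)) ∨
          (∃ p : Cell n, ∀ s, ω p (s + 2) = ω p s))
      atTop (nhds 0) := by
  have hq_pos : ∀ᶠ n in atTop, 0 < q n := (hq.eventually_gt_atTop 0).mono fun n h =>
    Nat.pos_of_ne_zero fun h0 => by simp [h0] at h
  have hratio : Tendsto (fun n : ℕ => (n : ℝ) / q n) atTop (nhds 0) := by
    convert hq.inv_tendsto_atTop using 1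
    ext n
    simp
  have hbound : Tendsto (fun n : ℕ => 17 * ((n : ℝ) / q n) ^ 2 + 4 * ((n : ℝ) / q n) ^ 4) atTop
      (nhds 0) := by
    simpa using ((hratio.pow 2).const_mul 17).add ((hratio.pow 4).const_mul 4)
  exact squeeze_zero' (Eventually.of_forall fun n => puzzleProb_nonneg _)
    (hq_pos.mono fun n h => puzzleProb_le (fun j => congrFun (hι n) j) h) hbound
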